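/- Let M be a continuous local martingale with M(0)=0 and DDS Brownian motion W, M(t) = W(⟨M⟩_t). Let B_m be the Skorohod-embedded walks of W and N_m(t) the discrete quadratic variation of M with step 2^{−m}. Then for every K > 0, sup_{0 ≤ t ≤ K} | M(t) − B_m(N_m(t)) | → 0 almost surely as m → ∞. -/

import Mathlib

open scoped Classical ENNReal NNReal
open MeasureTheory ProbabilityTheory Filter Set

noncomputable section

/-- `W` is a standard Brownian motion on `(Ω, P)`: starts at `0`, has continuous
paths, Gaussian increments `W_t - W_s ~ N(0, t-s)`, and independent increments. -/
def IsStandardBM {Ω : Type} [MeasurableSpace Ω] (P : Measure Ω) (W : ℝ → Ω → ℝ) : Prop :=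
  (∀ t : ℝ, StronglyMeasurable (W t)) ∧
  (∀ ω, W 0 ω = 0) ∧
  (∀ ω, Continuous fun t => W t ω) ∧
  (∀ s t : ℝ, 0 ≤ s → s ≤ t →
    P.map (fun ω => W t ω - W s ω) = gaussianReal 0 (Real.toNNReal (t - s))) ∧
  (∀ n : ℕ, ∀ u : ℕ → ℝ, Monotone u → u 0 = 0 → (∀ i, 0 ≤ u i) →
    iIndepFun
      (fun i ω => W (u (i + 1)) ω - W (u i) ω) P)

/-- Pathwise Skorohod stopping times with step `2^{-m}`:
`s_m(0)=0`, `s_m(k+1) = inf{s > s_m(k) : |W(s) - W(s_m(k))| = 2^{-m}}`. -/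
def skTime (Wp : ℝ → ℝ) (m : ℕ) : ℕ → ℝ
  | 0 => 0
  | k + 1 => sInf {s : ℝ | skTime Wp m k < s ∧
      |Wp s - Wp (skTime Wp m k)| = (2 : ℝ) ^ (-(m : ℤ))}

/-- The Skorohod-embedded walk `B_m`, with `B_m(k 2^{-2m}) = W(s_m(k))`, extended
to real `t ≥ 0` by linear interpolation. -/
def embWalk (Wp : ℝ → ℝ) (m : ℕ) (t : ℝ) : ℝ :=
  (1 - (t * 2 ^ (2 * m) - (⌊t * 2 ^ (2 * m)⌋₊ : ℝ))) * Wp (skTime Wp m ⌊t * 2 ^ (2 * m)⌋₊) +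
    (t * 2 ^ (2 * m) - (⌊t * 2 ^ (2 * m)⌋₊ : ℝ)) * Wp (skTime Wp m (⌊t * 2 ^ (2 * m)⌋₊ + 1))

/-- Pathwise Itô sum `(f(W)·W)^m_t`. -/
def itoSum (Wp : ℝ → ℝ) (f : ℝ → ℝ) (m : ℕ) (t : ℝ) : ℝ :=
  ∑ r ∈ Finset.range ⌊t * 2 ^ (2 * m)⌋₊,
    f (Wp (skTime Wp m r)) * (Wp (skTime Wp m (r + 1)) - Wp (skTime Wp m r))

/-- Pathwise Stratonovich sum `(f(W)∘W)^m_t`. -/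
def stratSum (Wp : ℝ → ℝ) (f : ℝ → ℝ) (m : ℕ) (t : ℝ) : ℝ :=
  ∑ r ∈ Finset.range ⌊t * 2 ^ (2 * m)⌋₊,
    (f (Wp (skTime Wp m r)) + f (Wp (skTime Wp m (r + 1)))) / 2 *
      (Wp (skTime Wp m (r + 1)) - Wp (skTime Wp m r))

/-- Discrete quadratic variation `N_m(t) = 2^{-2m}·#{r > 0 : τ_m(r) ≤ t}` of a path. -/
def discQV (Mp : ℝ → ℝ) (m : ℕ) (t : ℝ) : ℝ :=
  (2 : ℝ) ^ (-(2 * m : ℤ)) * (Set.ncard {r : ℕ | 0 < r ∧ skTime Mp m r ≤ t} : ℝ)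


/-! Off a null set every path of `W` is unbounded at `+∞` (for `n ≥ N`,
`P(|W n| ≤ C) ≤ 2C / √(2πn) → 0`), so all Skorohod times of `W` exist and, together with
`A → ∞`, the rest is deterministic. As `A` is continuous, nondecreasing and starts at `0`,
the Skorohod times of `M = W ∘ A` are the first passage times of `A` through those of `W`:
`A (τ_m k) = s_m k`. For `τ_m k ≤ t < τ_m (k+1)` this gives `N_m t = k 2^{-2m}`,
`B_m (N_m t) = W (s_m k)` and `A t ∈ [s_m k, s_m (k+1))`, on which `W` stays within `2^{-m}` of
`W (s_m k)`. Hence the error is at most `2^{-m}` uniformly in `t ≥ 0`. -/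

open scoped Topology

theorem ContinuousOn.exists_first_eq_of_lt_of_le {g : ℝ → ℝ} {a b c : ℝ}
    (hg : ContinuousOn g (Icc a b)) (hab : a ≤ b) (ha : g a < c) (hb : c ≤ g b) :
    ∃ t, a < t ∧ g t = c ∧ ∀ s ∈ Ico a t, g s < c := by
  set T := Icc a b ∩ g ⁻¹' Ici c
  have hT : IsClosed T := hg.preimage_isClosed_of_isClosed isClosed_Icc isClosed_Ici
  have hTb : BddBelow T := ⟨a, fun s hs => hs.1.1⟩
  obtain ⟨⟨hat, htb⟩, hct⟩ : sInf T ∈ T := hT.csInf_mem ⟨b, ⟨hab, le_rfl⟩, hb⟩ hTb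
  have hbefore : ∀ s ∈ Ico a (sInf T), g s < c := fun s hs =>
    not_le.1 fun hcs => hs.2.not_ge (csInf_le hTb ⟨⟨hs.1, hs.2.le.trans htb⟩, hcs⟩)
  have hat' : a < sInf T := hat.lt_of_ne fun h => (h ▸ ha).not_ge hct
  obtain ⟨x, hx, hgx⟩ := intermediate_value_Icc hat (hg.mono (Icc_subset_Icc_right htb))
    ⟨ha.le, hct⟩
  have hxt : x = sInf T := hx.2.eq_of_not_lt fun hlt => (hbefore x ⟨hx.1, hlt⟩).ne hgx
  exact ⟨sInf T, hat', hxt ▸ hgx, hbefore⟩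

section SkorohodTimes

variable {W A : ℝ → ℝ} {m k : ℕ}

theorem skTime_succ_eq_of_isLeast {t : ℝ}
    (h : IsLeast {s | skTime W m k < s ∧ |W s - W (skTime W m k)| = 2 ^ (-(m : ℤ))} t) :
    skTime W m (k + 1) = t :=
  h.csInf_eq

theorem skTime_succ_spec (hW : Continuous W) (hWub : ∀ C : ℝ, ∃ᶠ t in atTop, C < |W t|)
    (m k : ℕ) :
    skTime W m k < skTime W m (k + 1) ∧
      |W (skTime W m (k + 1)) - W (skTime W m k)| = 2 ^ (-(m : ℤ)) ∧
      ∀ u ∈ Ico (skTime W m k) (skTime W m (k + 1)),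
        |W u - W (skTime W m k)| < 2 ^ (-(m : ℤ)) := by
  set a := skTime W m k
  set ε : ℝ := 2 ^ (-(m : ℤ))
  obtain ⟨b, hab, hb⟩ := frequently_atTop.1 (hWub (|W a| + ε)) a
  have hεb : ε ≤ |W b - W a| := by linarith [abs_sub_abs_le_abs_sub (W b) (W a)]
  obtain ⟨t, hat, hεt, hbefore⟩ :=
    (hW.sub continuous_const).abs.continuousOn.exists_first_eq_of_lt_of_le hab
      (by simpa using zpow_pos two_pos _) hεb
  have hleast : IsLeast {s | a < s ∧ |W s - W a| = ε} t :=
    ⟨⟨hat, hεt⟩, fun s ⟨has, hεs⟩ => not_lt.1 fun hst => (hbefore s ⟨has.le, hst⟩).ne hεs⟩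
  rw [skTime_succ_eq_of_isLeast hleast]
  exact ⟨hat, hεt, hbefore⟩

theorem tendsto_skTime_atTop (hW : Continuous W) (hWub : ∀ C : ℝ, ∃ᶠ t in atTop, C < |W t|)
    (m : ℕ) : Tendsto (skTime W m) atTop atTop := by
  have hspec := skTime_succ_spec hW hWub m
  have hmono : Monotone (skTime W m) := monotone_nat_of_le_succ fun k => (hspec k).1.le
  refine (tendsto_atTop_of_monotone hmono).resolve_right ?_
  rintro ⟨l, hl⟩
  have hW_lim : Tendsto (fun k => W (skTime W m k)) atTop (𝓝 (W l)) := (hW.tendsto l).comp hl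
  have hjump : Tendsto (fun k => |W (skTime W m (k + 1)) - W (skTime W m k)|) atTop (𝓝 0) := by
    simpa using ((hW_lim.comp (tendsto_add_atTop_nat 1)).sub hW_lim).abs
  simp only [fun k => (hspec k).2.1, tendsto_const_nhds_iff] at hjump
  exact (zpow_pos (two_pos : (0 : ℝ) < 2) _).ne' hjump

theorem skTime_comp_succ_spec (hW : Continuous W) (hWub : ∀ C : ℝ, ∃ᶠ t in atTop, C < |W t|)
    (hA : Continuous A) (hAm : Monotone A) (hAtop : Tendsto A atTop atTop)
    (hk : A (skTime (W ∘ A) m k) = skTime W m k) :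
    skTime (W ∘ A) m k < skTime (W ∘ A) m (k + 1) ∧
      A (skTime (W ∘ A) m (k + 1)) = skTime W m (k + 1) ∧
      ∀ t < skTime (W ∘ A) m (k + 1), A t < skTime W m (k + 1) := by
  set τ := skTime (W ∘ A) m k
  obtain ⟨hs_lt, hs_jump, hs_before⟩ := skTime_succ_spec hW hWub m k
  obtain ⟨b, hb, hτb⟩ :=
    ((hAtop.eventually_ge_atTop (skTime W m (k + 1))).and (eventually_ge_atTop τ)).exists
  obtain ⟨t, hτt, hAt, hbefore⟩ :=
    hA.continuousOn.exists_first_eq_of_lt_of_le hτb (hk ▸ hs_lt) hb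
  have hbefore' : ∀ u < t, A u < skTime W m (k + 1) := fun u hu =>
    (le_or_gt τ u).elim (fun hτu => hbefore u ⟨hτu, hu⟩)
      fun huτ => ((hAm huτ.le).trans_eq hk).trans_lt hs_lt
  have hleast : IsLeast {u | τ < u ∧ |W (A u) - W (A τ)| = 2 ^ (-(m : ℤ))} t := by
    refine ⟨⟨hτt, by rwa [hAt, hk]⟩, fun u ⟨hτu, hu⟩ => not_lt.1 fun hut => ?_⟩
    rw [hk] at hu
    exact (hs_before (A u) ⟨hk ▸ hAm hτu.le, hbefore' u hut⟩).ne hu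
  rw [skTime_succ_eq_of_isLeast hleast]
  exact ⟨hτt, hAt, hbefore'⟩

theorem apply_skTime_comp (hW : Continuous W) (hWub : ∀ C : ℝ, ∃ᶠ t in atTop, C < |W t|)
    (hA : Continuous A) (hAm : Monotone A) (hA0 : A 0 = 0) (hAtop : Tendsto A atTop atTop)
    (m : ℕ) : ∀ k, A (skTime (W ∘ A) m k) = skTime W m k
  | 0 => hA0
  | k + 1 =>
    (skTime_comp_succ_spec hW hWub hA hAm hAtop
      (apply_skTime_comp hW hWub hA hAm hA0 hAtop m k)).2.1

end SkorohodTimes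

theorem discQV_eq_of_mem_Ico {M : ℝ → ℝ} {m k : ℕ} {t : ℝ} (hM : StrictMono (skTime M m))
    (ht : t ∈ Ico (skTime M m k) (skTime M m (k + 1))) :
    discQV M m t = 2 ^ (-(2 * m : ℤ)) * k := by
  have hcount : {r : ℕ | 0 < r ∧ skTime M m r ≤ t} = Icc 1 k := by
    ext r
    refine and_congr Iff.rfl ⟨fun hr => ?_, fun hr => (hM.monotone hr).trans ht.1⟩
    exact Nat.lt_succ_iff.1 (hM.lt_iff_lt.1 (hr.trans_lt ht.2))
  rw [discQV, hcount, ← Finset.coe_Icc, ncard_coe_finset, Nat.card_Icc, Nat.add_sub_cancel]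

theorem embWalk_two_zpow_mul_natCast (W : ℝ → ℝ) (m k : ℕ) :
    embWalk W m (2 ^ (-(2 * m : ℤ)) * k) = W (skTime W m k) := by
  have hgrid : (2 : ℝ) ^ (-(2 * m : ℤ)) * k * 2 ^ (2 * m) = k := by
    rw [zpow_neg, mul_right_comm, ← zpow_natCast, Nat.cast_mul, Nat.cast_ofNat,
      inv_mul_cancel₀ (zpow_ne_zero _ two_ne_zero), one_mul]
  rw [embWalk, hgrid, Nat.floor_natCast]
  ring

theorem abs_comp_sub_embWalk_discQV_le {W A : ℝ → ℝ} (hW : Continuous W)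
    (hWub : ∀ C : ℝ, ∃ᶠ t in atTop, C < |W t|) (hA : Continuous A) (hAm : Monotone A)
    (hA0 : A 0 = 0) (hAtop : Tendsto A atTop atTop) (m : ℕ) {t : ℝ} (ht : 0 ≤ t) :
    |W (A t) - embWalk W m (discQV (W ∘ A) m t)| ≤ 2 ^ (-(m : ℤ)) := by
  have hAτ := apply_skTime_comp hW hWub hA hAm hA0 hAtop m
  have hstep k := skTime_comp_succ_spec hW hWub hA hAm hAtop (hAτ k)
  have hτ_mono : StrictMono (skTime (W ∘ A) m) := strictMono_nat_of_lt_succ fun k => (hstep k).1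
  have hτ_top : Tendsto (skTime (W ∘ A) m) atTop atTop := tendsto_atTop.2 fun b =>
    ((tendsto_skTime_atTop hW hWub m).eventually_gt_atTop (A b)).mono fun k hk =>
      (hAm.reflect_lt (hk.trans_eq (hAτ k).symm)).le
  obtain ⟨N, hN⟩ := (hτ_top.eventually_gt_atTop t).exists
  obtain ⟨k, -, htk⟩ := mem_iUnion₂.1 (Ico_subset_biUnion_Ico N (skTime (W ∘ A) m) ⟨ht, hN⟩)
  rw [discQV_eq_of_mem_Ico hτ_mono htk, embWalk_two_zpow_mul_natCast]
  refine ((skTime_succ_spec hW hWub m k).2.2 (A t) ⟨?_, (hstep k).2.2 t htk.2⟩).le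
  exact (hAτ k).symm.trans_le (hAm htk.1)

theorem gaussianReal_Icc_le (μ : ℝ) {v : ℝ≥0} (hv : v ≠ 0) (a b : ℝ) :
    gaussianReal μ v (Icc a b) ≤ ENNReal.ofReal ((b - a) / √(2 * Real.pi * v)) := by
  have hpdf x : gaussianPDF μ v x ≤ ENNReal.ofReal (√(2 * Real.pi * v))⁻¹ := by
    refine ENNReal.ofReal_le_ofReal (mul_le_of_le_one_right (by positivity) ?_)
    exact Real.exp_le_one_iff.2 (div_nonpos_of_nonpos_of_nonneg (by nlinarith) (by positivity))
  calc gaussianReal μ v (Icc a b)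
      ≤ ∫⁻ _ in Icc a b, ENNReal.ofReal (√(2 * Real.pi * v))⁻¹ := by
        rw [gaussianReal_apply μ hv]
        exact lintegral_mono hpdf
    _ = ENNReal.ofReal ((b - a) / √(2 * Real.pi * v)) := by
        rw [setLIntegral_const, Real.volume_Icc, ← ENNReal.ofReal_mul (by positivity),
          div_eq_mul_inv, mul_comm]

theorem tendsto_gaussianReal_Icc_atTop (μ a b : ℝ) :
    Tendsto (fun v : ℝ≥0 => gaussianReal μ v (Icc a b)) atTop (𝓝 0) := by
  have hbound : Tendsto (fun v : ℝ≥0 => ENNReal.ofReal ((b - a) / √(2 * Real.pi * v)))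
      atTop (𝓝 0) := by
    rw [← ENNReal.ofReal_zero]
    refine ENNReal.tendsto_ofReal (tendsto_const_nhds.div_atTop ?_)
    exact Real.tendsto_sqrt_atTop.comp
      ((NNReal.tendsto_coe_atTop.2 tendsto_id).const_mul_atTop (by positivity))
  refine tendsto_of_tendsto_of_tendsto_of_le_of_le' tendsto_const_nhds hbound
    (Eventually.of_forall fun _ => zero_le) ?_
  filter_upwards [eventually_gt_atTop 0] with v hv
  exact gaussianReal_Icc_le μ hv.ne' a b

namespace IsStandardBM

variable {Ω : Type} [MeasurableSpace Ω] {P : Measure Ω} {W : ℝ → Ω → ℝ}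

theorem measure_abs_le (hW : IsStandardBM P W) {t : ℝ} (ht : 0 ≤ t) (C : ℝ) :
    P {ω | |W t ω| ≤ C} = gaussianReal 0 t.toNNReal (Icc (-C) C) := by
  obtain ⟨hmeas, h0, -, hlaw, -⟩ := hW
  have hpre : (fun ω => W t ω - W 0 ω) ⁻¹' Icc (-C) C = {ω | |W t ω| ≤ C} := by
    ext ω
    simp [h0 ω, abs_le]
  have hmeas_sub : Measurable fun ω => W t ω - W 0 ω :=
    (hmeas t).measurable.sub (hmeas 0).measurable
  rw [← hpre, ← Measure.map_apply hmeas_sub measurableSet_Icc, hlaw 0 t le_rfl ht, sub_zero]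

theorem measure_forall_ge_abs_le_eq_zero (hW : IsStandardBM P W) (N : ℕ) (C : ℝ) :
    P {ω | ∀ n ≥ N, |W n ω| ≤ C} = 0 := by
  have hlaw : Tendsto (fun n : ℕ => gaussianReal 0 (n : ℝ).toNNReal (Icc (-C) C)) atTop (𝓝 0) :=
    (tendsto_gaussianReal_Icc_atTop 0 (-C) C).comp
      (tendsto_real_toNNReal_atTop.comp tendsto_natCast_atTop_atTop)
  refine le_antisymm (ge_of_tendsto hlaw ?_) zero_le
  filter_upwards [eventually_ge_atTop N] with n hn
  rw [← hW.measure_abs_le n.cast_nonneg]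
  exact measure_mono fun ω hω => hω n hn

theorem ae_frequently_lt_abs (hW : IsStandardBM P W) :
    ∀ᵐ ω ∂P, ∀ C : ℝ, ∃ᶠ t in atTop, C < |W t ω| := by
  have hnat : ∀ᵐ ω ∂P, ∀ C N : ℕ, ∃ n ≥ N, (C : ℝ) < |W n ω| := by
    refine ae_all_iff.2 fun C => ae_all_iff.2 fun N => measure_mono_null (fun ω hω => ?_)
      (hW.measure_forall_ge_abs_le_eq_zero N C)
    simpa using hω
  filter_upwards [hnat] with ω hω C
  refine frequently_atTop.2 fun a => ?_
  obtain ⟨n, hn, hCn⟩ := hω ⌈C⌉₊ ⌈a⌉₊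
  exact ⟨n, (Nat.le_ceil a).trans (Nat.cast_le.2 hn), (Nat.le_ceil C).trans_lt hCn⟩

end IsStandardBM

theorem embedded_walk_approximates_local_martingale_general {Ω : Type} [MeasurableSpace Ω]
    (P : Measure Ω) (M W : ℝ → Ω → ℝ) (A : ℝ → Ω → ℝ)
    (hW : IsStandardBM P W)
    (hA0 : ∀ ω, A 0 ω = 0) (hAcont : ∀ ω, Continuous fun t => A t ω)
    (hAmono : ∀ ω, Monotone fun t => A t ω)
    (hAinf : ∀ᵐ ω ∂P, Tendsto (fun t => A t ω) atTop atTop)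
    (hDDS : ∀ t ω, M t ω = W (A t ω) ω)
    (K : ℝ) :
    ∀ᵐ ω ∂P,
      Tendsto (fun m : ℕ => ⨆ t : Set.Icc (0 : ℝ) K,
          |M (t : ℝ) ω - embWalk (fun u => W u ω) m (discQV (fun u => M u ω) m (t : ℝ))|)
        atTop (nhds 0) := by
  have hWcont : ∀ ω, Continuous fun t => W t ω := hW.2.2.1
  filter_upwards [hW.ae_frequently_lt_abs, hAinf] with ω hWub hAtop
  have hbound (m : ℕ) : ⨆ t : Set.Icc (0 : ℝ) K,
      |M (t : ℝ) ω - embWalk (fun u => W u ω) m (discQV (fun u => M u ω) m (t : ℝ))|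
        ≤ 2 ^ (-(m : ℤ)) := by
    refine Real.iSup_le (fun t => ?_) (zpow_pos two_pos _).le
    simp only [hDDS]
    exact abs_comp_sub_embWalk_discQV_le (hWcont ω) hWub (hAcont ω) (hAmono ω) (hA0 ω) hAtop
      m t.2.1
  have hmesh : Tendsto (fun m : ℕ => (2 : ℝ) ^ (-(m : ℤ))) atTop (𝓝 0) := by
    simpa only [zpow_neg, zpow_natCast, ← inv_pow] using
      tendsto_pow_atTop_nhds_zero_of_lt_one (by norm_num) (by norm_num : (2 : ℝ)⁻¹ < 1)
  exact squeeze_zero (fun m => Real.iSup_nonneg fun _ => abs_nonneg _) hbound hmesh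

/-- The time-changed embedded walks `B_m(N_m(t))` converge a.s. uniformly on
compacts to `M(t)`, where `B_m` is the Skorohod-embedded walk of the DDS Brownian
motion `W` of `M` and `N_m` is the discrete quadratic variation of `M`. -/
theorem embedded_walk_approximates_local_martingale {Ω : Type} [MeasurableSpace Ω]
    (P : Measure Ω) [IsProbabilityMeasure P] (M W : ℝ → Ω → ℝ) (A : ℝ → Ω → ℝ)
    (hW : IsStandardBM P W)
    (hA0 : ∀ ω, A 0 ω = 0) (hAcont : ∀ ω, Continuous fun t => A t ω)
    (hAmono : ∀ ω, Monotone fun t => A t ω)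
    (hAinf : ∀ᵐ ω ∂P, Tendsto (fun t => A t ω) atTop atTop)
    (hDDS : ∀ t ω, M t ω = W (A t ω) ω)
    (K : ℝ) (hK : 0 < K) :
    ∀ᵐ ω ∂P,
      Tendsto (fun m : ℕ => ⨆ t : Set.Icc (0 : ℝ) K,
          |M (t : ℝ) ω - embWalk (fun u => W u ω) m (discQV (fun u => M u ω) m (t : ℝ))|)
        atTop (nhds 0) :=
  embedded_walk_approximates_local_martingale_general P M W A hW hA0 hAcont hAmono hAinf hDDS K
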